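/- Let G be the graph with vertex set ℤ, where x and y are adjacent iff |x - y| = 1, all vertex weights and edge weights equal to 1, and δ_x(y) defined by δ_x(x) = 2, δ_x(y) = -1 if |x - y| = 1, and δ_x(y) = 0 otherwise. Then for all x, y ∈ ℤ with x - y = j ≥ 0 and all ℓ ≥ 1, the sum over z_1, ..., z_{ℓ-1} ∈ ℤ of δ_x(z_1) δ_{z_1}(z_2) ⋯ δ_{z_{ℓ-1}}(y) equals the sum over pairs (i, k) of nonnegative integers with k + j + 2i = ℓ of (-1)^{ℓ+k} * (ℓ! / (k! * i! * (i+j)!)) * 2^k. -/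

import Mathlib

/-!
The Laplacian acts on `ℤ` as convolution with `2 - T - T⁻¹ = -T⁻¹ (1 - T)²`, so the `(x, y)`
entry of its `n`-th power is `(-1) ^ |x - y| * (2n).choose (n + |x - y|)`; this closed form is
checked against the recurrence `Δⁿ⁺¹ = Δⁿ Δ` by applying Pascal's rule twice. The stated sum is
the coefficient of `X ^ (ℓ - j)` in `(X + 1) ^ (2ℓ) = (2X + (X² + 1)) ^ ℓ`, expanded binomially
twice.
-/

/-- The Laplacian matrix of `ℤ` with unit weights. -/
noncomputable def deltaZ : ℤ → ℤ → ℝ :=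
  fun x y => if x = y then 2 else if |x - y| = 1 then -1 else 0

/-- `deltaZPow ℓ` is the `ℓ`-th matrix power of `deltaZ` (the identity for `ℓ = 0`). -/
noncomputable def deltaZPow : ℕ → ℤ → ℤ → ℝ
  | 0 => fun x y => if x = y then 1 else 0
  | n + 1 => fun x y => ∑' z, deltaZPow n x z * deltaZ z y

open Finset Polynomial

namespace Nat

lemma choose_add_two_add_two (m s : ℕ) :
    (m + 2).choose (s + 2) = m.choose s + 2 * m.choose (s + 1) + m.choose (s + 2) := by
  simp only [choose_succ_succ]
  ring

lemma choose_two_mul_succ_succ (n : ℕ) :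
    (2 * (n + 1)).choose (n + 1) = 2 * ((2 * n).choose n + (2 * n).choose (n + 1)) := by
  rw [mul_add_one, choose_succ_succ (2 * n + 1) n, ← choose_symm_half, choose_succ_succ (2 * n) n]
  ring

lemma cast_factorial_div_eq_choose_mul_choose (a b c : ℕ) :
    ((a + b + c).factorial : ℝ) / (a.factorial * b.factorial * c.factorial) =
      (a + b + c).choose a * (b + c).choose b := by
  have hbc := add_choose_mul_factorial_mul_factorial c b
  have habc := add_choose_mul_factorial_mul_factorial (b + c) a
  rw [add_comm c b] at hbc
  rw [add_comm (b + c) a, ← add_assoc] at habc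
  rw [div_eq_iff (by positivity), ← habc, ← hbc]
  push_cast
  ring

end Nat

lemma deltaZ_eq_ite (z y : ℤ) :
    deltaZ z y = if z = y then 2 else if (z - y).natAbs = 1 then -1 else 0 := by
  simp only [deltaZ, Int.abs_eq_natAbs, Nat.cast_eq_one]

lemma deltaZPow_succ_apply (n : ℕ) (x y : ℤ) :
    deltaZPow (n + 1) x y =
      2 * deltaZPow n x y - deltaZPow n x (y - 1) - deltaZPow n x (y + 1) := by
  have hsupp : ∀ z ∉ ({y - 1, y, y + 1} : Finset ℤ), deltaZPow n x z * deltaZ z y = 0 := by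
    intro z hz
    simp only [mem_insert, mem_singleton, not_or] at hz
    rw [deltaZ_eq_ite, if_neg hz.2.1, if_neg (by omega), mul_zero]
  simp only [deltaZPow]
  rw [tsum_eq_sum hsupp, sum_insert (by simp only [mem_insert, mem_singleton]; omega),
    sum_pair (by omega)]
  simp (disch := omega) only [deltaZ_eq_ite, if_pos, if_neg, if_true]
  ring

noncomputable def laplacianKernel (n : ℕ) (d : ℤ) : ℝ :=
  (-1) ^ d.natAbs * (2 * n).choose (n + d.natAbs)

lemma laplacianKernel_neg (n : ℕ) (d : ℤ) : laplacianKernel n (-d) = laplacianKernel n d := by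
  simp only [laplacianKernel, Int.natAbs_neg]

lemma laplacianKernel_succ_natCast (n t : ℕ) :
    laplacianKernel (n + 1) t =
      2 * laplacianKernel n t - laplacianKernel n (t + 1) - laplacianKernel n (t - 1) := by
  rcases t with _ | t
  · simp only [laplacianKernel, Nat.cast_zero, zero_add, zero_sub, Int.natAbs_zero, Int.natAbs_one,
      Int.natAbs_neg, add_zero, pow_zero, pow_one]
    rw [Nat.choose_two_mul_succ_succ]
    push_cast
    ring
  · have hsucc : ((t + 1 : ℕ) + 1 : ℤ).natAbs = t + 2 := by omega
    have hpred : ((t + 1 : ℕ) - 1 : ℤ).natAbs = t := by omega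
    simp only [laplacianKernel, hsucc, hpred, Int.natAbs_natCast]
    rw [show 2 * (n + 1) = 2 * n + 2 by ring, show n + 1 + (t + 1) = n + t + 2 by ring,
      Nat.choose_add_two_add_two, ← add_assoc, ← add_assoc]
    push_cast
    ring

lemma laplacianKernel_succ (n : ℕ) (d : ℤ) :
    laplacianKernel (n + 1) d =
      2 * laplacianKernel n d - laplacianKernel n (d + 1) - laplacianKernel n (d - 1) := by
  obtain ⟨t, rfl | rfl⟩ := Int.eq_nat_or_neg d
  · exact laplacianKernel_succ_natCast n t
  · rw [show -(t : ℤ) + 1 = -(t - 1) by ring, show -(t : ℤ) - 1 = -(t + 1) by ring]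
    simp only [laplacianKernel_neg, laplacianKernel_succ_natCast]
    ring

theorem deltaZPow_eq_laplacianKernel (n : ℕ) (x y : ℤ) :
    deltaZPow n x y = laplacianKernel n (x - y) := by
  induction n generalizing y with
  | zero =>
    by_cases h : x = y
    · simp [deltaZPow, laplacianKernel, h]
    · simp [deltaZPow, laplacianKernel, h, Nat.choose_eq_zero_of_lt,
        Int.natAbs_pos.2 (sub_ne_zero.2 h)]
  | succ n ih =>
    rw [deltaZPow_succ_apply, ih, ih, ih, laplacianKernel_succ,
      show x - (y - 1) = x - y + 1 by ring, show x - (y + 1) = x - y - 1 by ring]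

lemma add_one_pow_two_mul_eq_sum (ℓ : ℕ) :
    (X + 1 : ℕ[X]) ^ (2 * ℓ) =
      ∑ p ∈ range (ℓ + 1) ×ˢ range (ℓ + 1),
        C (2 ^ p.2 * ℓ.choose p.2 * (ℓ - p.2).choose p.1) * X ^ (p.2 + 2 * p.1) := by
  rw [pow_mul, show (X + 1 : ℕ[X]) ^ 2 = 2 * X + (X ^ 2 + 1) by ring, add_pow, sum_product,
    sum_comm]
  refine sum_congr rfl fun k hk => ?_
  have hk : k ≤ ℓ := Nat.lt_succ_iff.1 (mem_range.1 hk)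
  have hsq : (X ^ 2 + 1 : ℕ[X]) ^ (ℓ - k) =
      ∑ i ∈ range (ℓ + 1), (X ^ 2) ^ i * 1 ^ (ℓ - k - i) * ((ℓ - k).choose i : ℕ[X]) := by
    rw [add_pow]
    refine sum_subset (range_subset_range.2 (by omega)) fun i _ hi => ?_
    rw [Nat.choose_eq_zero_of_lt (by simpa using hi), Nat.cast_zero, mul_zero]
  rw [hsq, mul_sum, sum_mul]
  refine sum_congr rfl fun i _ => ?_
  simp only [← C_eq_natCast, Nat.cast_id, map_mul, map_pow, map_ofNat, one_pow, mul_one]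
  ring

lemma sum_two_pow_mul_choose_mul_choose (ℓ j : ℕ) :
    ∑ p ∈ (range (ℓ + 1) ×ˢ range (ℓ + 1)).filter (fun p => p.2 + j + 2 * p.1 = ℓ),
      2 ^ p.2 * ℓ.choose p.2 * (2 * p.1 + j).choose p.1 = (2 * ℓ).choose (ℓ + j) := by
  rcases lt_or_ge ℓ j with hj | hj
  · rw [Nat.choose_eq_zero_of_lt (by omega), sum_eq_zero]
    intro p hp
    have := (mem_filter.1 hp).2
    omega
  have hcoeff := congrArg (coeff · (ℓ - j)) (add_one_pow_two_mul_eq_sum ℓ)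
  simp only [coeff_X_add_one_pow, Nat.cast_id, finsetSum_coeff, coeff_C_mul, coeff_X_pow]
    at hcoeff
  rw [Nat.choose_symm_of_eq_add (show 2 * ℓ = ℓ + j + (ℓ - j) by omega), hcoeff, sum_filter]
  refine sum_congr rfl fun p _ => ?_
  by_cases hp : p.2 + j + 2 * p.1 = ℓ
  · rw [if_pos hp, if_pos (by omega), mul_one, show ℓ - p.2 = 2 * p.1 + j by omega]
  · rw [if_neg hp, if_neg (by omega), mul_zero]

theorem deltaZPow_eval_general (j : ℕ) (x y : ℤ) (hxy : x - y = j) (ℓ : ℕ) :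
    deltaZPow ℓ x y =
      ∑ p ∈ (Finset.range (ℓ + 1) ×ˢ Finset.range (ℓ + 1)).filter
          (fun p => p.2 + j + 2 * p.1 = ℓ),
        (-1 : ℝ) ^ (ℓ + p.2) *
          ((ℓ.factorial : ℝ) / (p.2.factorial * p.1.factorial * (p.1 + j).factorial)) *
          2 ^ p.2 := by
  rw [deltaZPow_eq_laplacianKernel, hxy, laplacianKernel, Int.natAbs_natCast,
    ← sum_two_pow_mul_choose_mul_choose ℓ j, Nat.cast_sum, mul_sum]
  refine sum_congr rfl fun ⟨i, k⟩ hp => ?_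
  obtain rfl : k + j + 2 * i = ℓ := (mem_filter.1 hp).2
  have hsign : (-1 : ℝ) ^ (k + j + 2 * i + k) = (-1) ^ j := by
    rw [show k + j + 2 * i + k = j + 2 * (i + k) by ring, pow_add, pow_mul, neg_one_sq, one_pow,
      mul_one]
  rw [hsign, show k + j + 2 * i = k + i + (i + j) by ring, show 2 * i + j = i + (i + j) by ring,
    Nat.cast_factorial_div_eq_choose_mul_choose]
  push_cast
  ring

/-- Combinatorial evaluation of the entries of powers of the Laplacian on `ℤ`. -/
theorem deltaZPow_eval (j : ℕ) (x y : ℤ) (hxy : x - y = j) (ℓ : ℕ) (hℓ : 1 ≤ ℓ) :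
    deltaZPow ℓ x y =
      ∑ p ∈ (Finset.range (ℓ + 1) ×ˢ Finset.range (ℓ + 1)).filter
          (fun p => p.2 + j + 2 * p.1 = ℓ),
        (-1 : ℝ) ^ (ℓ + p.2) *
          ((ℓ.factorial : ℝ) / (p.2.factorial * p.1.factorial * (p.1 + j).factorial)) *
          2 ^ p.2 :=
  deltaZPow_eval_general j x y hxy ℓ
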